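/- For an admissible linear chain A with adjoint A*, one has d(A) = d(A*) and moreover d(A) = d(overline{A*}) + d(underline{A}), where overline removes the first entry and underline removes the last entry. -/

import Mathlib

/-!
`ind l = disc l.tail / disc l` is always in lowest terms, since the continuant recurrence
`disc (a :: b :: l) = a * disc (b :: l) - disc l` preserves coprimality of consecutive
discriminants; for admissible `l` the same recurrence gives `0 < disc l.tail < disc l`, so the
denominator is positive. As `disc` is invariant under reversal,
`1 - ind A.reverse = (disc A - disc A.dropLast) / disc A` is in lowest terms as well, and
comparing numerators and denominators with `ind B` gives `disc B = disc A` and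
`disc B.tail = disc A - disc A.dropLast`.
-/

/-- The tridiagonal matrix of a linear chain: diagonal entries from the list,
entries `-1` on the first sub- and super-diagonals, `0` elsewhere. -/
def chainMatrix (l : List ℤ) : Matrix (Fin l.length) (Fin l.length) ℤ :=
  fun i j =>
    if i = j then l.get i
    else if (i : ℕ) + 1 = (j : ℕ) ∨ (j : ℕ) + 1 = (i : ℕ) then -1 else 0

/-- The discriminant of a linear chain. -/
def disc (l : List ℤ) : ℤ := (chainMatrix l).det

/-- A linear chain is admissible if it is nonempty and all entries are ≥ 2. -/
def Admissible (l : List ℤ) : Prop := l ≠ [] ∧ ∀ a ∈ l, 2 ≤ a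

/-- The inductance of a chain. -/
def ind (l : List ℤ) : ℚ := (disc l.tail : ℚ) / (disc l : ℚ)

/-- `B` is the adjoint of `A`. -/
def IsAdjoint (A B : List ℤ) : Prop := Admissible B ∧ ind B = 1 - ind A.reverse

lemma disc_nil : disc [] = 1 := by
  simp [disc]

lemma disc_singleton (a : ℤ) : disc [a] = a := by
  simp [disc, chainMatrix]

section Continuant

variable (a b : ℤ) (l : List ℤ)

lemma chainMatrix_cons_zero_zero : chainMatrix (a :: l) 0 0 = a := by
  simp [chainMatrix]

lemma chainMatrix_cons_cons_zero_one : chainMatrix (a :: b :: l) 0 1 = -1 := by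
  simp [chainMatrix]

lemma chainMatrix_cons_cons_one_zero : chainMatrix (a :: b :: l) 1 0 = -1 := by
  simp [chainMatrix]

lemma chainMatrix_cons_cons_zero_succ_succ (j : Fin l.length) :
    chainMatrix (a :: b :: l) 0 j.succ.succ = 0 := by
  simp [chainMatrix, Fin.ext_iff]

lemma chainMatrix_cons_cons_succ_succ_zero (i : Fin l.length) :
    chainMatrix (a :: b :: l) i.succ.succ 0 = 0 := by
  simp [chainMatrix, Fin.ext_iff]

lemma chainMatrix_cons_submatrix_succ :
    (chainMatrix (a :: l)).submatrix Fin.succ Fin.succ = chainMatrix l := by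
  ext i j
  simp [chainMatrix, Fin.ext_iff]

lemma disc_cons_cons : disc (a :: b :: l) = a * disc (b :: l) - disc l := by
  have hminor :
      ((chainMatrix (a :: b :: l)).submatrix Fin.succ (Fin.succAbove 1)).det = -disc l := by
    have hcol : (Fin.succAbove 1 ∘ Fin.succ : Fin l.length → _) = Fin.succ ∘ Fin.succ :=
      funext Fin.one_succAbove_succ
    rw [Matrix.det_succ_column_zero (n := l.length), Fin.sum_univ_succ]
    simp only [Matrix.submatrix_apply, Matrix.submatrix_submatrix, Fin.one_succAbove_zero,
      Fin.succ_zero_eq_one, Fin.succAbove_zero, chainMatrix_cons_cons_one_zero,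
      chainMatrix_cons_cons_succ_succ_zero, mul_zero, zero_mul, Finset.sum_const_zero, add_zero,
      hcol]
    rw [← Matrix.submatrix_submatrix]
    -- `erw`: the index types here are `Fin (l.length + 1)`, in the lemma `Fin (b :: l).length`
    erw [chainMatrix_cons_submatrix_succ, chainMatrix_cons_submatrix_succ]
    simp [disc]
  rw [disc, Matrix.det_succ_row_zero (n := l.length + 1), Fin.sum_univ_succ, Fin.sum_univ_succ]
  simp only [chainMatrix_cons_zero_zero, Fin.succ_zero_eq_one, chainMatrix_cons_cons_zero_one,
    chainMatrix_cons_cons_zero_succ_succ, Fin.succAbove_zero, hminor, mul_zero, zero_mul,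
    Finset.sum_const_zero, add_zero]
  erw [chainMatrix_cons_submatrix_succ]
  simp [disc]
  ring

end Continuant

lemma chainMatrix_reverse (l : List ℤ) :
    chainMatrix l.reverse = (chainMatrix l).submatrix
      ((finCongr l.length_reverse).trans Fin.revPerm)
      ((finCongr l.length_reverse).trans Fin.revPerm) := by
  ext i j
  have hi : (i : ℕ) < l.length := by simpa using i.isLt
  have hj : (j : ℕ) < l.length := by simpa using j.isLt
  simp only [chainMatrix, Fin.ext_iff, Matrix.submatrix_apply, Equiv.trans_apply, finCongr_apply,
    Fin.revPerm_apply, Fin.val_rev, Fin.val_cast, List.get_eq_getElem, List.getElem_reverse]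
  split_ifs <;> first | omega | (congr 1; omega)

lemma disc_reverse (l : List ℤ) : disc l.reverse = disc l := by
  rw [disc, chainMatrix_reverse, Matrix.det_submatrix_equiv_self, disc]

lemma disc_tail_reverse (l : List ℤ) : disc l.reverse.tail = disc l.dropLast := by
  rw [List.tail_reverse, disc_reverse]

lemma ind_reverse (l : List ℤ) : ind l.reverse = disc l.dropLast / disc l := by
  rw [ind, disc_tail_reverse, disc_reverse]

lemma isCoprime_disc_tail_disc : ∀ l : List ℤ, IsCoprime (disc l.tail) (disc l)
  | [] => by simpa [disc_nil] using isCoprime_one_left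
  | [a] => by simpa [disc_nil] using isCoprime_one_left
  | a :: b :: l => by
    have h := (isCoprime_disc_tail_disc (b :: l)).symm.neg_right.add_mul_left_right a
    rw [List.tail_cons, disc_cons_cons]
    rwa [List.tail_cons, neg_add_eq_sub, mul_comm] at h

lemma Admissible.disc_tail_pos_and_lt_disc {l : List ℤ} (hl : Admissible l) :
    0 < disc l.tail ∧ disc l.tail < disc l := by
  induction l with
  | nil => exact absurd rfl hl.1
  | cons a t ih =>
    have ha : 2 ≤ a := hl.2 a List.mem_cons_self
    cases t with
    | nil => simp only [List.tail_cons, disc_nil, disc_singleton]; omega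
    | cons b s =>
      obtain ⟨hs, hsb⟩ :=
        ih ⟨List.cons_ne_nil b s, fun x hx => hl.2 x (List.mem_cons_of_mem a hx)⟩
      rw [List.tail_cons] at hs hsb
      rw [List.tail_cons, disc_cons_cons]
      constructor <;> nlinarith

lemma Admissible.disc_pos {l : List ℤ} (hl : Admissible l) : 0 < disc l :=
  hl.disc_tail_pos_and_lt_disc.1.trans hl.disc_tail_pos_and_lt_disc.2

theorem disc_adjoint (A B : List ℤ) (hA : Admissible A) (hB : IsAdjoint A B) :
    disc A = disc B ∧ disc A = disc B.tail + disc A.dropLast := by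
  obtain ⟨hB, hind⟩ := hB
  have hcopA : IsCoprime (disc A - disc A.dropLast) (disc A) := by
    have h := (isCoprime_disc_tail_disc A.reverse).neg_left.add_mul_right_left 1
    rwa [disc_tail_reverse, disc_reverse, one_mul, neg_add_eq_sub] at h
  have hfrac :
      (disc B.tail : ℚ) / disc B = ((disc A - disc A.dropLast : ℤ) : ℚ) / disc A := by
    rw [← ind, hind, ind_reverse, Int.cast_sub, sub_div,
      div_self (by exact_mod_cast hA.disc_pos.ne')]
  obtain ⟨hnum, hden⟩ := Rat.div_int_inj hB.disc_pos hA.disc_pos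
    (Int.isCoprime_iff_gcd_eq_one.mp (isCoprime_disc_tail_disc B))
    (Int.isCoprime_iff_gcd_eq_one.mp hcopA) hfrac
  exact ⟨hden.symm, by omega⟩
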